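/- arXiv:1405.2679 — 5 statements merged into one kernel-verified Lean document; each statement's English description precedes it below -/
import Mathlib

section
/- Let d ≥ 2 be an integer, y ∈ ℝ^d, 0 < η < r, and let w be a shape function as in the context which in addition satisfies w′(s) > −r for every s ∈ ℝ. Let a : ℝ^d → ℝ be continuously differentiable with ∇a integrable and compactly supported. Then the shifted absorption a∘(Id+v_{y,r,η})^{-1} satisfies ∫_{ℝ^d} | a((Id+v_{y,r,η})^{-1}(x)) − a(x) | dx ≤ (η ‖w‖_∞ / r) · (1 + η ‖w‖_∞ / (r(r−η)))^{d−1} · ∫_{ℝ^d} |∇a(x)| dx, where ‖w‖_∞ = sup_{s∈ℝ} |w(s)| and (Id+v_{y,r,η})^{-1} denotes the inverse of the bijection x ↦ x + v_{y,r,η}(x). -/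
open MeasureTheory RealInnerProductSpace
open scoped ENNReal

lemma aux_geom {q : ℝ} (hq : 1 ≤ q) (d : ℕ) (hd : 1 ≤ d) :
    q ^ d - 1 ≤ d * (q - 1) * q ^ (d - 1) := by
  have h1 : q ^ d - 1 = (∑ i ∈ Finset.range d, q ^ i) * (q - 1) := (geom_sum_mul q d).symm
  have h2 : (∑ i ∈ Finset.range d, q ^ i) ≤ (d : ℝ) * q ^ (d - 1) := by
    calc (∑ i ∈ Finset.range d, q ^ i) ≤ ∑ _i ∈ Finset.range d, q ^ (d - 1) := by
          refine Finset.sum_le_sum fun i hi => ?_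
          refine pow_le_pow_right₀ hq ?_
          simp only [Finset.mem_range] at hi; omega
      _ = (d : ℝ) * q ^ (d - 1) := by simp [mul_comm]
  have hq1 : 0 ≤ q - 1 := by linarith
  have hq0 : (0:ℝ) ≤ q ^ (d-1) := by positivity
  nlinarith [mul_le_mul_of_nonneg_right h2 hq1]

lemma aux_smul {d : ℕ} (g : EuclideanSpace ℝ (Fin d) → ℝ≥0∞) (hg : Measurable g)
    {s : ℝ} (hs : 0 < s) :
    ∫⁻ x, g (s • x) = ENNReal.ofReal ((s ^ d)⁻¹) * ∫⁻ x, g x := by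
  have hmap := MeasureTheory.Measure.map_addHaar_smul (volume : Measure (EuclideanSpace ℝ (Fin d))) (ne_of_gt hs)
  rw [← MeasureTheory.lintegral_map hg (measurable_const_smul s), hmap,
    lintegral_smul_measure]
  congr 1
  rw [finrank_euclideanSpace_fin, abs_of_nonneg (by positivity)]

lemma aux_1d {t₀ : ℝ} (ht0 : 0 < t₀) (ht1 : t₀ ≤ 1) (d : ℕ) (hd : 1 ≤ d) :
    (∫⁻ s in Set.Icc t₀ 1, ENNReal.ofReal ((s ^ (d+1))⁻¹))
      = ENNReal.ofReal (((t₀⁻¹) ^ d - 1) / d) := by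
  have hcont : ContinuousOn (fun s : ℝ => (s ^ (d+1))⁻¹) (Set.Icc t₀ 1) := by
    refine ContinuousOn.inv₀ (by fun_prop) fun s hs => ?_
    have : 0 < s := lt_of_lt_of_le ht0 hs.1
    positivity
  have hint : IntegrableOn (fun s : ℝ => (s ^ (d+1))⁻¹) (Set.Icc t₀ 1) :=
    hcont.integrableOn_compact isCompact_Icc
  rw [← ofReal_integral_eq_lintegral_ofReal hint]
  · congr 1
    have h0 : (0:ℝ) ∉ Set.uIcc t₀ 1 := by
      rw [Set.uIcc_of_le ht1]
      intro h; exact absurd h.1 (by linarith)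
    calc (∫ s in Set.Icc t₀ 1, (s ^ (d+1))⁻¹)
        = ∫ s in Set.Ioc t₀ 1, (s ^ (d+1))⁻¹ := integral_Icc_eq_integral_Ioc
      _ = ∫ s in t₀..1, (s ^ (d+1))⁻¹ := (intervalIntegral.integral_of_le ht1).symm
      _ = ∫ s in t₀..1, (s : ℝ) ^ (-(d+1) : ℤ) := by
          refine intervalIntegral.integral_congr fun s hs => ?_
          rw [zpow_neg]; norm_cast
      _ = ((1:ℝ) ^ ((-(d+1):ℤ) + 1) - t₀ ^ ((-(d+1):ℤ) + 1)) / ((-(d+1):ℤ) + 1) := by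
          refine integral_zpow (Or.inr ⟨by omega, h0⟩)
      _ = ((t₀⁻¹) ^ d - 1) / d := by
          have h1 : ((-(d+1):ℤ) + 1) = -(d:ℤ) := by ring
          rw [h1]
          rw [one_zpow, zpow_neg, zpow_natCast, ← inv_pow]
          have hd0 : (0:ℝ) < (d:ℝ) := by exact_mod_cast Nat.pos_of_ne_zero (by omega)
          push_cast
          field_simp
          ring_nf
          rw [mul_inv_cancel_right₀ hd0.ne', mul_inv_cancel₀ hd0.ne']
          ring
  · filter_upwards [ae_restrict_mem measurableSet_Icc] with s hs
    have : (0:ℝ) < s := lt_of_lt_of_le ht0 hs.1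
    positivity

lemma aux_alg {η r M ρ δ : ℝ} (hη : 0 < η) (hηr : η < r) (hM : 0 ≤ M)
    (hρ : 0 < ρ) (hδ0 : 0 ≤ δ) (hδM : δ ≤ η * M / r) (hsupp : 0 < δ → r - η ≤ ρ)
    (d : ℕ) (hd : 1 ≤ d) :
    ρ * ((((ρ + δ) / ρ) ^ d - 1) / d) ≤ (η * M / r) * (1 + η * M / (r * (r - η))) ^ (d-1) := by
  have hr : 0 < r := lt_trans hη hηr
  have hrη : 0 < r - η := by linarith
  have hRHS1 : (0:ℝ) ≤ η * M / r := by positivity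
  have hRHS2 : (1:ℝ) ≤ 1 + η * M / (r * (r - η)) := by
    have : (0:ℝ) ≤ η * M / (r * (r - η)) := by positivity
    linarith
  set q : ℝ := (ρ + δ) / ρ with hq
  have hq1 : 1 ≤ q := by
    rw [hq, le_div_iff₀ hρ]; linarith
  have hgeom := aux_geom hq1 d hd
  have hd0 : (0:ℝ) < (d:ℝ) := by exact_mod_cast Nat.pos_of_ne_zero (by omega)
  have key : ρ * ((q ^ d - 1) / d) ≤ δ * q ^ (d-1) := by
    have hq' : ρ * (q - 1) = δ := by rw [hq, mul_sub, mul_div_assoc', mul_div_cancel_left₀ _ hρ.ne']; ring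
    calc ρ * ((q ^ d - 1) / d) ≤ ρ * ((d * (q - 1) * q ^ (d-1)) / d) := by
          gcongr
      _ = (ρ * (q - 1)) * q ^ (d-1) := by field_simp
      _ = δ * q ^ (d-1) := by rw [hq']
  refine key.trans ?_
  rcases eq_or_lt_of_le hδ0 with h0 | hpos
  · rw [← h0]; simp
    apply mul_nonneg hRHS1 (pow_nonneg (by linarith) _)
  · have hρr := hsupp hpos
    have hqle : q ≤ 1 + η * M / (r * (r - η)) := by
      rw [hq]
      rw [div_le_iff₀ hρ]
      have h1 : δ ≤ η * M / (r * (r - η)) * ρ := by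
        have h2 : η * M / (r * (r - η)) * (r - η) ≤ η * M / (r * (r - η)) * ρ := by
          apply mul_le_mul_of_nonneg_left hρr (by positivity)
        have h3 : η * M / (r * (r - η)) * (r - η) = η * M / r := by field_simp
        linarith
      nlinarith
    have hqpow : q ^ (d-1) ≤ (1 + η * M / (r * (r - η))) ^ (d-1) :=
      pow_le_pow_left₀ (by linarith) hqle _
    exact mul_le_mul hδM hqpow (pow_nonneg (by linarith [hq1]) _) hRHS1

set_option maxHeartbeats 2000000 in
/-- `L¹` estimate on the shifted absorption:
`‖a∘(Id+v)⁻¹ − a‖_{L¹} ≤ (η‖w‖_∞/r)(1 + η‖w‖_∞/(r(r−η)))^{d−1} ‖∇a‖_{L¹}`. -/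
theorem stmt_6
    (d : ℕ) (hd : 2 ≤ d)
    (y : EuclideanSpace ℝ (Fin d)) (η r : ℝ) (hη : 0 < η) (hηr : η < r)
    (w : ℝ → ℝ) (hw : ContDiff ℝ (⊤ : ℕ∞) w)
    (hw_supp : Function.support w ⊆ Set.Icc (-1 : ℝ) 1)
    (hw_nonneg : ∀ s, 0 ≤ w s) (hw_int : (∫ s, w s) = 1)
    (hw' : ∀ s, -r < deriv w s)
    (v : EuclideanSpace ℝ (Fin d) → EuclideanSpace ℝ (Fin d))
    (hv : ∀ x, x ≠ y → v x = ((η / r) * w ((‖x - y‖ - r) / η) / ‖x - y‖) • (x - y))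
    (hvy : v y = 0)
    (hbij : Function.Bijective fun x => x + v x)
    (a : EuclideanSpace ℝ (Fin d) → ℝ) (ha : ContDiff ℝ 1 a)
    (ha_int : Integrable (fun x => ‖gradient a x‖))
    (ha_supp : HasCompactSupport (gradient a)) :
    (∫ x, |a (Function.invFun (fun z => z + v z) x) - a x|)
      ≤ (η * (⨆ s, |w s|) / r) * (1 + η * (⨆ s, |w s|) / (r * (r - η))) ^ (d - 1) *
          ∫ x, ‖gradient a x‖ := by
  classical
  have hr : (0:ℝ) < r := hη.trans hηr
  set M : ℝ := ⨆ s, |w s| with hM_def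
  -- boundedness of w
  have hwc : HasCompactSupport w :=
    HasCompactSupport.of_support_subset_isCompact isCompact_Icc hw_supp
  have hMb : BddAbove (Set.range fun s => |w s|) :=
    (hw.continuous.abs).bddAbove_range_of_hasCompactSupport hwc.abs
  have hwM : ∀ s, w s ≤ M := fun s => (le_abs_self _).trans (le_ciSup hMb s)
  have hM0 : (0:ℝ) ≤ M := (abs_nonneg _).trans (le_ciSup hMb 0)
  set C : ℝ := (η * M / r) * (1 + η * M / (r * (r - η))) ^ (d - 1) with hC_def
  have hC1 : (1:ℝ) ≤ 1 + η * M / (r * (r - η)) := by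
    have : (0:ℝ) ≤ η * M / (r * (r - η)) := by
      apply div_nonneg (by positivity)
      nlinarith
    linarith
  have hC0 : 0 ≤ C := mul_nonneg (by positivity) (pow_nonneg (by linarith) _)
  have hI0 : 0 ≤ ∫ x, ‖gradient a x‖ := integral_nonneg fun x => norm_nonneg _
  -- the radial map
  set f : ℝ → ℝ := fun ρ => ρ + (η / r) * w ((ρ - r) / η) with hf_def
  have hfc : Continuous f := by
    have := hw.continuous
    fun_prop
  have hfρ : ∀ ρ, ρ ≤ f ρ := by
    intro ρ
    have : 0 ≤ (η / r) * w ((ρ - r) / η) := mul_nonneg (by positivity) (hw_nonneg _)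
    simp only [hf_def]; linarith
  have hfM : ∀ ρ, f ρ ≤ ρ + η * M / r := by
    intro ρ
    have h1 : (η / r) * w ((ρ - r) / η) ≤ (η / r) * M :=
      mul_le_mul_of_nonneg_left (hwM _) (by positivity)
    have h2 : (η / r) * M = η * M / r := by ring
    simp only [hf_def]; linarith
  have hfsupp : ∀ ρ, f ρ ≠ ρ → r - η ≤ ρ := by
    intro ρ hne
    have hw0 : w ((ρ - r) / η) ≠ 0 := by
      intro h0; apply hne; simp only [hf_def, h0]; ring
    have := hw_supp hw0
    have h1 : -1 ≤ (ρ - r) / η := this.1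
    have := (le_div_iff₀ hη).mp h1
    linarith
  have hfmono : StrictMono f := by
    have hder : ∀ ρ, HasDerivAt f (1 + (η / r) * (deriv w ((ρ - r) / η) * (1/η))) ρ := by
      intro ρ
      have hg : HasDerivAt (fun ρ : ℝ => (ρ - r) / η) (1/η) ρ := by
        simpa using ((hasDerivAt_id ρ).sub_const r).div_const η
      have hwd : HasDerivAt w (deriv w ((ρ - r) / η)) ((ρ - r) / η) :=
        (hw.differentiable (by simp) ((ρ - r) / η)).hasDerivAt
      have hcomp := HasDerivAt.comp ρ hwd hg
      exact (hasDerivAt_id ρ).add (hcomp.const_mul (η / r))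
    apply strictMono_of_deriv_pos
    intro ρ
    rw [(hder ρ).deriv]
    have h1 : (η / r) * (deriv w ((ρ - r) / η) * (1/η)) = deriv w ((ρ - r) / η) / r := by
      field_simp
    rw [h1]
    have := hw' ((ρ - r) / η)
    have h2 : -1 < deriv w ((ρ - r) / η) / r := by
      rw [lt_div_iff₀ hr]; linarith
    linarith
  -- the inverse map
  set T : EuclideanSpace ℝ (Fin d) → EuclideanSpace ℝ (Fin d) := fun z => z + v z with hT_def
  set G : EuclideanSpace ℝ (Fin d) → EuclideanSpace ℝ (Fin d) := Function.invFun T with hG_def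
  have hTG : ∀ x, G x + v (G x) = x := by
    intro x
    have := Function.rightInverse_invFun hbij.surjective x
    simpa [hT_def, hG_def] using this
  have hGy : G y = y := by
    have h1 : G y + v (G y) = y + v y := by rw [hTG y, hvy, add_zero]
    exact hbij.injective h1
  -- geometry of the inverse
  have hgeo : ∀ x : EuclideanSpace ℝ (Fin d), x ≠ y →
      G x ≠ y ∧ ‖x - y‖ = f ‖G x - y‖ ∧
        G x - y = ((‖G x - y‖) / ‖x - y‖) • (x - y) := by
    intro x hx
    have hz : G x + v (G x) = x := hTG x
    have hzny : G x ≠ y := by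
      intro h
      rw [h, hvy, add_zero] at hz
      exact hx hz.symm
    refine ⟨hzny, ?_⟩
    have hρ'pos : 0 < ‖G x - y‖ := norm_pos_iff.mpr (sub_ne_zero.mpr hzny)
    set ρ' : ℝ := ‖G x - y‖ with hρ'_def
    set c : ℝ := η / r * w ((ρ' - r) / η) / ρ' with hc_def
    have hc0 : 0 ≤ c := div_nonneg (mul_nonneg (by positivity) (hw_nonneg _)) hρ'pos.le
    have hvz : v (G x) = c • (G x - y) := hv (G x) hzny
    have hxy : x - y = (1 + c) • (G x - y) := by
      conv_lhs => rw [← hz]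
      rw [hvz, add_smul, one_smul, add_sub_right_comm]
    have hρ : ‖x - y‖ = (1 + c) * ρ' := by
      rw [hxy, norm_smul, Real.norm_of_nonneg (by linarith)]
    have hcρ : c * ρ' = η / r * w ((ρ' - r) / η) := by
      rw [hc_def]; field_simp
    constructor
    · rw [hρ]
      simp only [hf_def]
      have hex : (1 + c) * ρ' = ρ' + c * ρ' := by ring
      linarith [hcρ, hex]
    · rw [hρ, hxy, smul_smul]
      have h1 : (0:ℝ) < 1 + c := by linarith
      have h2 : ρ' / ((1 + c) * ρ') * (1 + c) = 1 := by field_simp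
      rw [h2, one_smul]
  -- gradient continuity and F
  have hgac : Continuous (gradient a) := by
    have h1 : Continuous (fderiv ℝ a) := ha.continuous_fderiv one_ne_zero
    exact (LinearIsometryEquiv.continuous _).comp h1
  set F : EuclideanSpace ℝ (Fin d) → ℝ≥0∞ := fun u => ENNReal.ofReal ‖gradient a (y + u)‖ with hF_def
  have hFm : Measurable F := by
    apply ENNReal.measurable_ofReal.comp
    exact (hgac.norm.comp (continuous_const.add continuous_id)).measurable
  -- the kernels
  set S : Set (ℝ × EuclideanSpace ℝ (Fin d)) :=
    {p | p.1 ∈ Set.Ioc (0:ℝ) 1 ∧ ‖p.2 - y‖ ≤ f (p.1 * ‖p.2 - y‖)} with hS_def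
  set K : ℝ × EuclideanSpace ℝ (Fin d) → ℝ≥0∞ :=
    S.indicator (fun p => ENNReal.ofReal ‖p.2 - y‖ * F (p.1 • (p.2 - y))) with hK_def
  have hSm : MeasurableSet S := by
    have h1 : S = {p : ℝ × EuclideanSpace ℝ (Fin d) | p.1 ∈ Set.Ioc (0:ℝ) 1} ∩
        {p : ℝ × EuclideanSpace ℝ (Fin d) | ‖p.2 - y‖ ≤ f (p.1 * ‖p.2 - y‖)} := rfl
    rw [h1]
    exact (measurable_fst measurableSet_Ioc).inter (measurableSet_le (by fun_prop) (by fun_prop))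
  have hKm : Measurable K := by
    apply Measurable.indicator _ hSm
    apply Measurable.fun_mul
    · fun_prop
    · exact hFm.comp (by fun_prop)
  set S₂ : Set (ℝ × EuclideanSpace ℝ (Fin d)) :=
    {p | p.1 ∈ Set.Ioc (0:ℝ) 1 ∧ ‖p.2‖ ≤ p.1 * f ‖p.2‖} with hS₂_def
  set K₂ : ℝ × EuclideanSpace ℝ (Fin d) → ℝ≥0∞ :=
    S₂.indicator (fun p => ENNReal.ofReal ((p.1 ^ (d+1))⁻¹) *
      (ENNReal.ofReal ‖p.2‖ * F p.2)) with hK₂_def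
  have hS₂m : MeasurableSet S₂ := by
    have h1 : S₂ = {p : ℝ × EuclideanSpace ℝ (Fin d) | p.1 ∈ Set.Ioc (0:ℝ) 1} ∩
        {p : ℝ × EuclideanSpace ℝ (Fin d) | ‖p.2‖ ≤ p.1 * f ‖p.2‖} := rfl
    rw [h1]
    exact (measurable_fst measurableSet_Ioc).inter (measurableSet_le (by fun_prop) (by fun_prop))
  have hK₂m : Measurable K₂ := by
    apply Measurable.indicator _ hS₂m
    apply Measurable.fun_mul
    · fun_prop
    · exact Measurable.fun_mul (by fun_prop) (hFm.comp measurable_snd)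
  -- step A
  have stepA : ∀ x : EuclideanSpace ℝ (Fin d), ENNReal.ofReal |a (G x) - a x| ≤ ∫⁻ s, K (s, x) := by
    intro x
    by_cases hxy : x = y
    · simp [hxy, hGy]
    · obtain ⟨hzny, hρf, hzray⟩ := hgeo x hxy
      have hρpos : 0 < ‖x - y‖ := norm_pos_iff.mpr (sub_ne_zero.mpr hxy)
      have hρ'pos : 0 < ‖G x - y‖ := norm_pos_iff.mpr (sub_ne_zero.mpr hzny)
      set ρ : ℝ := ‖x - y‖ with hρ_def
      set ρ' : ℝ := ‖G x - y‖ with hρ'_def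
      set t₀ : ℝ := ρ' / ρ with ht₀_def
      have ht₀pos : 0 < t₀ := div_pos hρ'pos hρpos
      have hρ'ρ : ρ' ≤ ρ := by rw [hρf]; exact hfρ ρ'
      have ht₀1 : t₀ ≤ 1 := by rw [ht₀_def, div_le_one hρpos]; exact hρ'ρ
      set φ : ℝ → ℝ := fun s => a (y + s • (x - y)) with hφ_def
      set φ' : ℝ → ℝ := fun s => (fderiv ℝ a (y + s • (x - y))) (x - y) with hφ'_def
      have hφd : ∀ s : ℝ, HasDerivAt φ (φ' s) s := by
        intro s
        have hL : HasDerivAt (fun s : ℝ => y + s • (x - y)) (x - y) s := by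
          have h1 := (hasDerivAt_id s).smul_const (x - y)
          simpa using h1.const_add y
        exact ((ha.differentiable one_ne_zero _).hasFDerivAt.comp_hasDerivAt s hL)
      have hφ'c : Continuous φ' := by
        have h1 : Continuous fun s : ℝ => fderiv ℝ a (y + s • (x - y)) :=
          (ha.continuous_fderiv one_ne_zero).comp (by fun_prop)
        exact h1.clm_apply continuous_const
      have hgc : Continuous fun s : ℝ => ρ * ‖gradient a (y + s • (x - y))‖ :=
        continuous_const.mul ((hgac.comp (by fun_prop)).norm)
      have hφ1 : φ 1 = a x := by simp [hφ_def]
      have hφt0 : φ t₀ = a (G x) := by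
        show a (y + t₀ • (x - y)) = a (G x)
        congr 1
        rw [← hzray]
        simp
      have hftc : a x - a (G x) = ∫ s in t₀..1, φ' s := by
        rw [intervalIntegral.integral_eq_sub_of_hasDerivAt (fun s _ => hφd s)
          (hφ'c.intervalIntegrable _ _), hφ1, hφt0]
      have hptw : ∀ s, |φ' s| ≤ ρ * ‖gradient a (y + s • (x - y))‖ := by
        intro s
        have h1 : |φ' s| ≤ ‖fderiv ℝ a (y + s • (x - y))‖ * ‖x - y‖ :=
          (fderiv ℝ a (y + s • (x - y))).le_opNorm (x - y)
        have h2 : ‖gradient a (y + s • (x - y))‖ = ‖fderiv ℝ a (y + s • (x - y))‖ :=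
          LinearIsometryEquiv.norm_map _ _
        rw [h2, mul_comm]
        exact h1
      have habs : |a (G x) - a x| ≤ ∫ s in t₀..1, ρ * ‖gradient a (y + s • (x - y))‖ := by
        rw [abs_sub_comm, hftc]
        calc |∫ s in t₀..1, φ' s| ≤ ∫ s in t₀..1, |φ' s| :=
              intervalIntegral.abs_integral_le_integral_abs ht₀1
          _ ≤ ∫ s in t₀..1, ρ * ‖gradient a (y + s • (x - y))‖ := by
              apply intervalIntegral.integral_mono_on ht₀1
                ((hφ'c.abs).intervalIntegrable _ _) (hgc.intervalIntegrable _ _)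
              exact fun s _ => hptw s
      refine (ENNReal.ofReal_le_ofReal habs).trans ?_
      have h2 : ENNReal.ofReal (∫ s in t₀..1, ρ * ‖gradient a (y + s • (x - y))‖)
          = ∫⁻ s in Set.Ioc t₀ 1, ENNReal.ofReal (ρ * ‖gradient a (y + s • (x - y))‖) := by
        rw [intervalIntegral.integral_of_le ht₀1]
        exact ofReal_integral_eq_lintegral_ofReal (hgc.integrableOn_Ioc)
          (Filter.Eventually.of_forall fun s => mul_nonneg hρpos.le (norm_nonneg _))
      rw [h2, ← lintegral_indicator measurableSet_Ioc]
      apply lintegral_mono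
      intro s
      by_cases hs : s ∈ Set.Ioc t₀ 1
      · rw [Set.indicator_of_mem hs]
        have hcond : ‖x - y‖ ≤ f (s * ‖x - y‖) := by
          have h3 : ρ' ≤ s * ρ := by
            have h4 := mul_le_mul_of_nonneg_right hs.1.le hρpos.le
            rwa [ht₀_def, div_mul_cancel₀ _ (ne_of_gt hρpos)] at h4
          calc (‖x - y‖ : ℝ) = f ρ' := hρf
            _ ≤ f (s * ρ) := hfmono.monotone h3
        have hmem : (s, x) ∈ S := ⟨⟨ht₀pos.trans hs.1, hs.2⟩, hcond⟩
        simp only [hK_def]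
        rw [Set.indicator_of_mem hmem]
        rw [hF_def]
        simp only
        rw [← ENNReal.ofReal_mul (norm_nonneg _)]
      · rw [Set.indicator_of_notMem hs]
        exact bot_le
  -- step B: main lintegral chain
  have main : (∫⁻ x, ENNReal.ofReal |a (G x) - a x|)
      ≤ ENNReal.ofReal C * ENNReal.ofReal (∫ x, ‖gradient a x‖) := by
    have hKm' : AEMeasurable (Function.uncurry fun (x : EuclideanSpace ℝ (Fin d)) (s : ℝ) =>
        K (s, x)) ((volume : Measure (EuclideanSpace ℝ (Fin d))).prod volume) :=
      (hKm.comp measurable_swap).aemeasurable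
    have hK₂m' : AEMeasurable (Function.uncurry fun (s : ℝ)
        (u : EuclideanSpace ℝ (Fin d)) => K₂ (s, u))
        ((volume : Measure ℝ).prod volume) := hK₂m.aemeasurable
    have hswap1 : (∫⁻ x : EuclideanSpace ℝ (Fin d), ∫⁻ s : ℝ, K (s, x))
        = ∫⁻ s : ℝ, ∫⁻ x : EuclideanSpace ℝ (Fin d), K (s, x) :=
      lintegral_lintegral_swap hKm'
    have hswap2 : (∫⁻ s : ℝ, ∫⁻ u : EuclideanSpace ℝ (Fin d), K₂ (s, u))
        = ∫⁻ u : EuclideanSpace ℝ (Fin d), ∫⁻ s : ℝ, K₂ (s, u) :=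
      lintegral_lintegral_swap hK₂m'
    have hs_eq : ∀ s : ℝ, (∫⁻ x : EuclideanSpace ℝ (Fin d), K (s, x))
        = ∫⁻ u : EuclideanSpace ℝ (Fin d), K₂ (s, u) := by
      intro s
      by_cases hs : s ∈ Set.Ioc (0:ℝ) 1
      · have hs0 : 0 < s := hs.1
        set A : Set (EuclideanSpace ℝ (Fin d)) := {u | ‖u‖ ≤ s * f ‖u‖} with hA_def
        have hAm : MeasurableSet A :=
          measurableSet_le continuous_norm.measurable
            ((continuous_const.mul (hfc.comp continuous_norm)).measurable)
        set I₀ : EuclideanSpace ℝ (Fin d) → ℝ≥0∞ :=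
          A.indicator (fun u => ENNReal.ofReal ‖u‖ * F u) with hI₀_def
        have hI₀m : Measurable I₀ := by
          apply Measurable.indicator _ hAm
          exact Measurable.mul (by fun_prop) hFm
        set H : EuclideanSpace ℝ (Fin d) → ℝ≥0∞ :=
          A.indicator (fun u => ENNReal.ofReal (s⁻¹ * ‖u‖) * F u) with hH_def
        have hHm : Measurable H := by
          apply Measurable.indicator _ hAm
          exact Measurable.mul (by fun_prop) hFm
        have hc1 : ∀ x : EuclideanSpace ℝ (Fin d), K (s, x) = H (s • (x - y)) := by
          intro x
          have hnorm : ‖s • (x - y)‖ = s * ‖x - y‖ := by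
            rw [norm_smul, Real.norm_of_nonneg hs0.le]
          have hmemiff : (s, x) ∈ S ↔ (s • (x - y)) ∈ A := by
            simp only [hS_def, hA_def, Set.mem_setOf_eq, hnorm]
            constructor
            · rintro ⟨_, h⟩
              exact mul_le_mul_of_nonneg_left h hs0.le
            · intro h
              exact ⟨hs, le_of_mul_le_mul_left h hs0⟩
          by_cases hmem : (s, x) ∈ S
          · rw [hK_def, Set.indicator_of_mem hmem, hH_def,
              Set.indicator_of_mem (hmemiff.mp hmem)]
            congr 1
            rw [hnorm, ← mul_assoc, inv_mul_cancel₀ (ne_of_gt hs0), one_mul]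
          · rw [hK_def, Set.indicator_of_notMem hmem, hH_def,
              Set.indicator_of_notMem (fun hmm => hmem (hmemiff.mpr hmm))]
        have hc2 : (∫⁻ x : EuclideanSpace ℝ (Fin d), K (s, x))
            = ∫⁻ x : EuclideanSpace ℝ (Fin d), H (s • x) := by
          simp_rw [hc1]
          exact lintegral_sub_right_eq_self (fun x => H (s • x)) y
        have hc3 : (∫⁻ x : EuclideanSpace ℝ (Fin d), H (s • x))
            = ENNReal.ofReal ((s ^ d)⁻¹) * ∫⁻ u, H u := aux_smul H hHm hs0
        have hc4 : (∫⁻ u, H u) = ENNReal.ofReal s⁻¹ * ∫⁻ u, I₀ u := by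
          have hHI : ∀ u, H u = ENNReal.ofReal s⁻¹ * I₀ u := by
            intro u
            by_cases hm : u ∈ A
            · rw [hH_def, hI₀_def, Set.indicator_of_mem hm, Set.indicator_of_mem hm,
                ENNReal.ofReal_mul (by positivity), mul_assoc]
            · rw [hH_def, hI₀_def, Set.indicator_of_notMem hm,
                Set.indicator_of_notMem hm, mul_zero]
          simp_rw [hHI]
          exact lintegral_const_mul _ hI₀m
        have hc5 : ∀ u, K₂ (s, u) = ENNReal.ofReal ((s ^ (d+1))⁻¹) * I₀ u := by
          intro u
          by_cases hm : u ∈ A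
          · have hmm : (s, u) ∈ S₂ := ⟨hs, hm⟩
            rw [hK₂_def, Set.indicator_of_mem hmm, hI₀_def, Set.indicator_of_mem hm]
          · rw [hK₂_def, Set.indicator_of_notMem (fun hmm => hm hmm.2), hI₀_def,
              Set.indicator_of_notMem hm, mul_zero]
        calc (∫⁻ x : EuclideanSpace ℝ (Fin d), K (s, x))
            = ENNReal.ofReal ((s ^ d)⁻¹) * (ENNReal.ofReal s⁻¹ * ∫⁻ u, I₀ u) := by
              rw [hc2, hc3, hc4]
          _ = ENNReal.ofReal ((s ^ (d+1))⁻¹) * ∫⁻ u, I₀ u := by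
              rw [← mul_assoc, ← ENNReal.ofReal_mul (by positivity)]
              congr 2
              rw [pow_succ, mul_inv]
          _ = ∫⁻ u : EuclideanSpace ℝ (Fin d), K₂ (s, u) := by
              simp_rw [hc5]
              rw [lintegral_const_mul _ hI₀m]
      · have h1 : ∀ x : EuclideanSpace ℝ (Fin d), K (s, x) = 0 := fun x =>
          Set.indicator_of_notMem (fun hm => hs hm.1) _
        have h2 : ∀ u : EuclideanSpace ℝ (Fin d), K₂ (s, u) = 0 := fun u =>
          Set.indicator_of_notMem (fun hm => hs hm.1) _
        simp only [h1, h2, lintegral_const, zero_mul]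
    have hu_bound : ∀ u : EuclideanSpace ℝ (Fin d),
        (∫⁻ s : ℝ, K₂ (s, u)) ≤ ENNReal.ofReal C * F u := by
      intro u
      by_cases hu : u = (0 : EuclideanSpace ℝ (Fin d))
      · have h0 : ∀ s : ℝ, K₂ (s, u) = 0 := by
          intro s
          rw [hK₂_def]
          by_cases hm : (s, u) ∈ S₂
          · rw [Set.indicator_of_mem hm]; simp [hu]
          · exact Set.indicator_of_notMem hm _
        simp only [h0, lintegral_zero]
        exact bot_le
      · have hρpos : 0 < ‖u‖ := norm_pos_iff.mpr hu
        have hfpos : 0 < f ‖u‖ := lt_of_lt_of_le hρpos (hfρ _)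
        set t₀ : ℝ := ‖u‖ / f ‖u‖ with ht₀_def
        have ht₀pos : 0 < t₀ := div_pos hρpos hfpos
        have ht₀1 : t₀ ≤ 1 := (div_le_one hfpos).mpr (hfρ _)
        have hX0 : 0 ≤ (t₀⁻¹ ^ d - 1) / d := by
          apply div_nonneg _ (Nat.cast_nonneg d)
          have h1 : (1:ℝ) ≤ t₀⁻¹ := one_le_inv_iff₀.mpr ⟨ht₀pos, ht₀1⟩
          have h2 : (1:ℝ) ≤ t₀⁻¹ ^ d := one_le_pow₀ h1
          linarith
        have hidx : ∀ s : ℝ, K₂ (s, u)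
            = Set.indicator (Set.Icc t₀ 1) (fun s => ENNReal.ofReal ((s ^ (d+1))⁻¹)) s
              * (ENNReal.ofReal ‖u‖ * F u) := by
          intro s
          have hmem : (s, u) ∈ S₂ ↔ s ∈ Set.Icc t₀ 1 := by
            simp only [hS₂_def, Set.mem_setOf_eq, Set.mem_Ioc, Set.mem_Icc]
            constructor
            · rintro ⟨⟨hs0, hs1⟩, hcond⟩
              exact ⟨(div_le_iff₀ hfpos).mpr (by linarith [hcond]), hs1⟩
            · rintro ⟨hts, hs1⟩
              have hs0 : 0 < s := lt_of_lt_of_le ht₀pos hts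
              refine ⟨⟨hs0, hs1⟩, ?_⟩
              have h3 := (div_le_iff₀ hfpos).mp hts
              linarith
          by_cases hm : (s, u) ∈ S₂
          · rw [hK₂_def, Set.indicator_of_mem hm, Set.indicator_of_mem (hmem.mp hm)]
          · rw [hK₂_def, Set.indicator_of_notMem hm,
              Set.indicator_of_notMem (fun hmm => hm (hmem.mpr hmm)), zero_mul]
        calc (∫⁻ s : ℝ, K₂ (s, u))
            = (∫⁻ s : ℝ, Set.indicator (Set.Icc t₀ 1)
                (fun s => ENNReal.ofReal ((s ^ (d+1))⁻¹)) s)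
                * (ENNReal.ofReal ‖u‖ * F u) := by
              simp_rw [hidx]
              exact lintegral_mul_const _
                ((ENNReal.measurable_ofReal.comp (by fun_prop)).indicator measurableSet_Icc)
          _ = ENNReal.ofReal ((t₀⁻¹ ^ d - 1) / d) * (ENNReal.ofReal ‖u‖ * F u) := by
              rw [lintegral_indicator measurableSet_Icc, aux_1d ht₀pos ht₀1 d (by omega)]
          _ ≤ ENNReal.ofReal C * F u := by
              rw [← mul_assoc, ← ENNReal.ofReal_mul hX0]
              apply mul_le_mul_left
              apply ENNReal.ofReal_le_ofReal
              have hδ0 : 0 ≤ f ‖u‖ - ‖u‖ := sub_nonneg.mpr (hfρ _)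
              have hδM : f ‖u‖ - ‖u‖ ≤ η * M / r := by linarith [hfM ‖u‖]
              have hδsupp : 0 < f ‖u‖ - ‖u‖ → r - η ≤ ‖u‖ := by
                intro h
                apply hfsupp ‖u‖
                intro he
                rw [he, sub_self] at h
                exact lt_irrefl 0 h
              have halg := aux_alg hη hηr hM0 hρpos hδ0 hδM hδsupp d (by omega)
              have hq : (‖u‖ + (f ‖u‖ - ‖u‖)) / ‖u‖ = t₀⁻¹ := by
                rw [ht₀_def]
                field_simp
                ring
              rw [hq] at halg
              rw [hC_def]
              calc (t₀⁻¹ ^ d - 1) / d * ‖u‖ = ‖u‖ * ((t₀⁻¹ ^ d - 1) / d) := by ring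
                _ ≤ η * M / r * (1 + η * M / (r * (r - η))) ^ (d - 1) := halg
    have hF_total : (∫⁻ u : EuclideanSpace ℝ (Fin d), F u)
        = ENNReal.ofReal (∫ x, ‖gradient a x‖) := by
      have h1 : (∫⁻ u : EuclideanSpace ℝ (Fin d), F u)
          = ∫⁻ x : EuclideanSpace ℝ (Fin d), ENNReal.ofReal ‖gradient a x‖ := by
        rw [hF_def]
        exact lintegral_add_left_eq_self (fun u => ENNReal.ofReal ‖gradient a u‖) y
      rw [h1, ← ofReal_integral_eq_lintegral_ofReal ha_int
        (Filter.Eventually.of_forall fun x => norm_nonneg _)]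
    calc (∫⁻ x : EuclideanSpace ℝ (Fin d), ENNReal.ofReal |a (G x) - a x|)
        ≤ ∫⁻ x : EuclideanSpace ℝ (Fin d), ∫⁻ s : ℝ, K (s, x) := lintegral_mono stepA
      _ = ∫⁻ s : ℝ, ∫⁻ x : EuclideanSpace ℝ (Fin d), K (s, x) := hswap1
      _ = ∫⁻ s : ℝ, ∫⁻ u : EuclideanSpace ℝ (Fin d), K₂ (s, u) := lintegral_congr hs_eq
      _ = ∫⁻ u : EuclideanSpace ℝ (Fin d), ∫⁻ s : ℝ, K₂ (s, u) := hswap2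
      _ ≤ ∫⁻ u : EuclideanSpace ℝ (Fin d), ENNReal.ofReal C * F u := lintegral_mono hu_bound
      _ = ENNReal.ofReal C * ∫⁻ u : EuclideanSpace ℝ (Fin d), F u := lintegral_const_mul _ hFm
      _ = ENNReal.ofReal C * ENNReal.ofReal (∫ x, ‖gradient a x‖) := by rw [hF_total]
  -- wrap-up
  by_cases hInt : Integrable (fun x => |a (G x) - a x|)
  · rw [integral_eq_lintegral_of_nonneg_ae (Filter.Eventually.of_forall fun x => abs_nonneg _)
      hInt.aestronglyMeasurable]
    refine ENNReal.toReal_le_of_le_ofReal (mul_nonneg hC0 hI0) ?_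
    rw [ENNReal.ofReal_mul hC0]
    exact main
  · rw [integral_undef hInt]
    exact mul_nonneg hC0 hI0
end

section
/- Let d ≥ 2 be an integer, y ∈ ℝ^d, 0 < η < r, and let w be a shape function as in the context which in addition satisfies w′(s) > −r for every s ∈ ℝ. Then for every t ∈ [0,1] the map x ↦ x + t·v_{y,r,η}(x) is a bijection of ℝ^d onto itself. -/
open MeasureTheory RealInnerProductSpace

/-- For every `t ∈ [0,1]`, the map `x ↦ x + t·v_{y,r,η}(x)` is a bijection of `ℝ^d`. -/
theorem stmt_7
    (d : ℕ) (hd : 2 ≤ d)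
    (y : EuclideanSpace ℝ (Fin d)) (η r : ℝ) (hη : 0 < η) (hηr : η < r)
    (w : ℝ → ℝ) (hw : ContDiff ℝ (⊤ : ℕ∞) w)
    (hw_supp : Function.support w ⊆ Set.Icc (-1 : ℝ) 1)
    (hw_nonneg : ∀ s, 0 ≤ w s) (hw_int : (∫ s, w s) = 1)
    (hw' : ∀ s, -r < deriv w s)
    (v : EuclideanSpace ℝ (Fin d) → EuclideanSpace ℝ (Fin d))
    (hv : ∀ x, x ≠ y → v x = ((η / r) * w ((‖x - y‖ - r) / η) / ‖x - y‖) • (x - y))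
    (hvy : v y = 0) :
    ∀ t ∈ Set.Icc (0 : ℝ) 1, Function.Bijective fun x => x + t • v x := by
  intro t ht
  obtain ⟨ht0, ht1⟩ := ht
  have hr : (0:ℝ) < r := hη.trans hηr
  have hη' : η ≠ 0 := ne_of_gt hη
  set f : ℝ → ℝ := fun s => s + t * ((η / r) * w ((s - r) / η)) with hf_def
  have hwdiff : Differentiable ℝ w := hw.differentiable (by simp)
  -- derivative of f
  have hfderiv : ∀ s, HasDerivAt f (1 + t * deriv w ((s - r) / η) / r) s := by
    intro s
    have h1 : HasDerivAt (fun s : ℝ => (s - r) / η) (1 / η) s := by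
      simpa using ((hasDerivAt_id s).sub_const r).div_const η
    have h2 : HasDerivAt (fun s : ℝ => w ((s - r) / η))
        (deriv w ((s - r) / η) * (1 / η)) s :=
      ((hwdiff ((s - r) / η)).hasDerivAt).comp s h1
    have h3 : HasDerivAt f (1 + t * ((η / r) * (deriv w ((s - r) / η) * (1 / η)))) s :=
      (hasDerivAt_id s).add ((h2.const_mul (η / r)).const_mul t)
    convert h3 using 1
    field_simp
  have hderiv_pos : ∀ s, 0 < deriv f s := by
    intro s
    rw [(hfderiv s).deriv]
    rcases eq_or_lt_of_le ht0 with h0 | h0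
    · simp [← h0]
    · have h1 : -r < deriv w ((s - r) / η) := hw' _
      have h2 : t * (-r) < t * deriv w ((s - r) / η) :=
        mul_lt_mul_of_pos_left h1 h0
      have h3 : -t < t * deriv w ((s - r) / η) / r := by
        rw [lt_div_iff₀ hr]; nlinarith
      linarith
  have hf_mono : StrictMono f := strictMono_of_deriv_pos hderiv_pos
  have hf_cont : Continuous f := by
    have : Differentiable ℝ f := fun s => (hfderiv s).differentiableAt
    exact this.continuous
  have hwzero : ∀ s : ℝ, 1 < |s| → w s = 0 := by
    intro s hs
    by_contra h
    have h2 := hw_supp h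
    rw [Set.mem_Icc] at h2
    have := abs_le.mpr h2
    linarith
  have hf0 : f 0 = 0 := by
    have hlt : (0 - r) / η < -1 := by
      rw [div_lt_iff₀ hη]; linarith
    have h0 : w ((0 - r) / η) = 0 := hwzero _ (lt_abs.mpr (Or.inr (by linarith)))
    have h1 : w (-r / η) = 0 := by rw [show -r / η = (0 - r) / η by ring]; exact h0
    simp [hf_def, h1]
  have hfpos : ∀ s : ℝ, 0 < s → 0 < f s := by
    intro s hs
    have := hf_mono hs
    rw [hf0] at this
    exact this
  -- the radial formula for the map
  have hmap : ∀ x : EuclideanSpace ℝ (Fin d), x ≠ y →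
      x + t • v x - y = (f ‖x - y‖ / ‖x - y‖) • (x - y) := by
    intro x hx
    have hs : (0:ℝ) < ‖x - y‖ := by
      rw [norm_pos_iff, sub_ne_zero]; exact hx
    rw [hv x hx]
    have : f ‖x - y‖ / ‖x - y‖ = 1 + t * ((η / r) * w ((‖x - y‖ - r) / η) / ‖x - y‖) := by
      rw [hf_def]
      field_simp
    rw [this]
    module
  have hnorm : ∀ x : EuclideanSpace ℝ (Fin d), x ≠ y →
      ‖x + t • v x - y‖ = f ‖x - y‖ := by
    intro x hx
    have hs : (0:ℝ) < ‖x - y‖ := by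
      rw [norm_pos_iff, sub_ne_zero]; exact hx
    rw [hmap x hx, norm_smul, Real.norm_eq_abs,
      abs_of_pos (div_pos (hfpos _ hs) hs), div_mul_cancel₀]
    exact ne_of_gt hs
  constructor
  · -- injective
    intro x₁ x₂ h
    simp only at h
    by_cases h1 : x₁ = y <;> by_cases h2 : x₂ = y
    · rw [h1, h2]
    · exfalso
      have hgy : x₁ + t • v x₁ = y := by rw [h1, hvy, smul_zero, add_zero]
      have := hnorm x₂ h2
      rw [← h, hgy, sub_self, norm_zero] at this
      have hs : (0:ℝ) < ‖x₂ - y‖ := by rw [norm_pos_iff, sub_ne_zero]; exact h2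
      exact absurd this.symm (ne_of_gt (hfpos _ hs))
    · exfalso
      have hgy : x₂ + t • v x₂ = y := by rw [h2, hvy, smul_zero, add_zero]
      have := hnorm x₁ h1
      rw [h, hgy, sub_self, norm_zero] at this
      have hs : (0:ℝ) < ‖x₁ - y‖ := by rw [norm_pos_iff, sub_ne_zero]; exact h1
      exact absurd this.symm (ne_of_gt (hfpos _ hs))
    · have hn : f ‖x₁ - y‖ = f ‖x₂ - y‖ := by
        rw [← hnorm x₁ h1, ← hnorm x₂ h2, h]
      have hss : ‖x₁ - y‖ = ‖x₂ - y‖ := hf_mono.injective hn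
      have heq : (f ‖x₁ - y‖ / ‖x₁ - y‖) • (x₁ - y)
          = (f ‖x₂ - y‖ / ‖x₂ - y‖) • (x₂ - y) := by
        rw [← hmap x₁ h1, ← hmap x₂ h2, h]
      rw [← hss] at heq
      have hs : (0:ℝ) < ‖x₁ - y‖ := by rw [norm_pos_iff, sub_ne_zero]; exact h1
      have hc : f ‖x₁ - y‖ / ‖x₁ - y‖ ≠ 0 :=
        ne_of_gt (div_pos (hfpos _ hs) hs)
      have := smul_right_injective (EuclideanSpace ℝ (Fin d)) hc heq
      have := sub_left_injective this
      exact this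
  · -- surjective
    intro z
    by_cases hz : z = y
    · exact ⟨y, by simp [hvy, hz]⟩
    · set s := ‖z - y‖ with hs_def
      have hs : (0:ℝ) < s := by rw [hs_def, norm_pos_iff, sub_ne_zero]; exact hz
      set M : ℝ := r + η + s with hM_def
      have hfM : f M = M := by
        have hlt : 1 < (M - r) / η := by
          rw [lt_div_iff₀ hη]; simp [hM_def]; linarith
        have : w ((M - r) / η) = 0 := hwzero _ (lt_abs.mpr (Or.inl hlt))
        simp [hf_def, this]
      have hsub : Set.Icc (f 0) (f M) ⊆ f '' Set.Icc 0 M :=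
        intermediate_value_Icc (by linarith) hf_cont.continuousOn
      have hmem : s ∈ Set.Icc (f 0) (f M) := by
        rw [hf0, hfM]
        exact ⟨le_of_lt hs, by linarith⟩
      obtain ⟨σ, hσmem, hσ⟩ := hsub hmem
      have hσpos : 0 < σ := by
        rcases lt_or_eq_of_le hσmem.1 with h | h
        · exact h
        · exfalso; rw [← h, hf0] at hσ; exact absurd hσ (ne_of_lt hs)
      refine ⟨y + (σ / s) • (z - y), ?_⟩
      have hxy : y + (σ / s) • (z - y) - y = (σ / s) • (z - y) := by abel
      have hxney : y + (σ / s) • (z - y) ≠ y := by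
        intro h
        rw [← sub_eq_zero] at h
        rw [hxy, smul_eq_zero] at h
        rcases h with h | h
        · exact absurd h (ne_of_gt (div_pos hσpos hs))
        · rw [sub_eq_zero] at h; exact hz h
      have hnormx : ‖y + (σ / s) • (z - y) - y‖ = σ := by
        rw [hxy, norm_smul, Real.norm_eq_abs, abs_of_pos (div_pos hσpos hs),
          ← hs_def, div_mul_cancel₀ _ (ne_of_gt hs)]
      have := hmap _ hxney
      rw [hnormx, hσ, hxy, smul_smul] at this
      have hc : s / σ * (σ / s) = 1 := by
        field_simp
      rw [hc, one_smul] at this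
      simp only at this ⊢
      rw [← sub_eq_zero]
      rw [sub_eq_iff_eq_add] at this
      rw [this]
      abel
end

section
/- Let d ≥ 2 be an integer, y ∈ ℝ^d, 0 < η < r, and let w be a shape function as in the context. Then for every x ≠ y and every t ∈ ℝ, the determinant of Id + t·Dv_{y,r,η}(x) (where Dv_{y,r,η}(x) is the Fréchet derivative of v_{y,r,η} at x) is given by det(Id + t·Dv_{y,r,η}(x)) = (1 + (t/r) w′((|x−y|−r)/η)) · (1 + (tη/(r|x−y|)) w((|x−y|−r)/η))^{d−1}. -/
open MeasureTheory RealInnerProductSpace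

lemma aux_hasFDerivAt_norm {E : Type*} [NormedAddCommGroup E] [InnerProductSpace ℝ E]
    {z : E} (hz : z ≠ 0) :
    HasFDerivAt (‖·‖) (‖z‖⁻¹ • innerSL ℝ z) z := by
  have h1 : HasFDerivAt (fun x : E => ‖x‖ ^ 2) (2 • innerSL ℝ z) z :=
    (hasStrictFDerivAt_norm_sq z).hasFDerivAt
  have hz' : (0:ℝ) < ‖z‖ := norm_pos_iff.mpr hz
  have h2 : HasDerivAt Real.sqrt (1 / (2 * Real.sqrt (‖z‖ ^ 2))) (‖z‖ ^ 2) :=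
    Real.hasDerivAt_sqrt (by positivity)
  have h3 : HasFDerivAt (fun x : E => Real.sqrt (‖x‖ ^ 2))
      ((1 / (2 * Real.sqrt (‖z‖ ^ 2))) • (2 • innerSL ℝ z)) z := h2.comp_hasFDerivAt z h1
  have h4 : (fun x : E => Real.sqrt (‖x‖ ^ 2)) = (‖·‖) := by
    funext x; exact Real.sqrt_sq (norm_nonneg x)
  rw [h4] at h3
  convert h3 using 1
  ext v
  simp only [Real.sqrt_sq hz'.le, ContinuousLinearMap.coe_smul', Pi.smul_apply,
    ContinuousLinearMap.smul_apply, smul_eq_mul]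
  field_simp
  ring

/-- Determinant formula:
`det(Id + t·Dv_{y,r,η}(x)) = (1 + (t/r)w′(⋯))·(1 + (tη/(r|x−y|))w(⋯))^{d−1}`. -/
theorem stmt_10
    (d : ℕ) (hd : 2 ≤ d)
    (y : EuclideanSpace ℝ (Fin d)) (η r : ℝ) (hη : 0 < η) (hηr : η < r)
    (w : ℝ → ℝ) (hw : ContDiff ℝ (⊤ : ℕ∞) w)
    (hw_supp : Function.support w ⊆ Set.Icc (-1 : ℝ) 1)
    (hw_nonneg : ∀ s, 0 ≤ w s) (hw_int : (∫ s, w s) = 1)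
    (v : EuclideanSpace ℝ (Fin d) → EuclideanSpace ℝ (Fin d))
    (hv : ∀ x, x ≠ y → v x = ((η / r) * w ((‖x - y‖ - r) / η) / ‖x - y‖) • (x - y))
    (hvy : v y = 0)
    (x : EuclideanSpace ℝ (Fin d)) (hx : x ≠ y) (t : ℝ) :
    LinearMap.det
        (ContinuousLinearMap.id ℝ (EuclideanSpace ℝ (Fin d)) + t • fderiv ℝ v x).toLinearMap
      = (1 + (t / r) * deriv w ((‖x - y‖ - r) / η)) *
          (1 + (t * η / (r * ‖x - y‖)) * w ((‖x - y‖ - r) / η)) ^ (d - 1) := by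
  haveI : NeZero d := ⟨by omega⟩
  have hr : (0:ℝ) < r := hη.trans hηr
  have hzne : x - y ≠ 0 := sub_ne_zero.mpr hx
  have hs : (0:ℝ) < ‖x - y‖ := norm_pos_iff.mpr hzne
  set s : ℝ := ‖x - y‖ with hs_def
  set u : ℝ := (s - r) / η with hu_def
  set g : ℝ → ℝ := fun a => η / r * w ((a - r) / η) / a with hg_def
  set gs : ℝ := η / r * w u / s with hgs_def
  set gd : ℝ := (η / r * (deriv w u * (1 / η)) * s - η / r * w u * 1) / s ^ 2 with hgd_def
  -- derivative of g at s
  have hwd : HasDerivAt w (deriv w u) u :=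
    ((hw.differentiable (by simp)) u).hasDerivAt
  have hlin : HasDerivAt (fun a : ℝ => (a - r) / η) (1 / η) s := by
    simpa using ((hasDerivAt_id s).sub_const r).div_const η
  have hcomp : HasDerivAt (fun a : ℝ => w ((a - r) / η)) (deriv w u * (1 / η)) s :=
    HasDerivAt.comp s hwd hlin
  have hgderiv : HasDerivAt g gd s := by
    exact ((hcomp.const_mul (η / r)).div (hasDerivAt_id s) hs.ne')
  -- derivative of the norm map
  have hsub : HasFDerivAt (fun x' : EuclideanSpace ℝ (Fin d) => x' - y)
      (ContinuousLinearMap.id ℝ (EuclideanSpace ℝ (Fin d))) x :=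
    (hasFDerivAt_id x).sub_const y
  have hn : HasFDerivAt (fun x' : EuclideanSpace ℝ (Fin d) => ‖x' - y‖)
      (s⁻¹ • innerSL ℝ (x - y)) x := by
    have h := (aux_hasFDerivAt_norm hzne).comp x hsub
    rw [ContinuousLinearMap.comp_id] at h
    exact h
  have hc : HasFDerivAt (fun x' : EuclideanSpace ℝ (Fin d) => g ‖x' - y‖)
      (gd • (s⁻¹ • innerSL ℝ (x - y))) x := by
    have h := hgderiv.comp_hasFDerivAt x hn
    exact h
  set D : EuclideanSpace ℝ (Fin d) →L[ℝ] EuclideanSpace ℝ (Fin d) :=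
    g s • ContinuousLinearMap.id ℝ (EuclideanSpace ℝ (Fin d)) +
      (gd • (s⁻¹ • innerSL ℝ (x - y))).smulRight (x - y) with hD_def
  have hF : HasFDerivAt (fun x' : EuclideanSpace ℝ (Fin d) => g ‖x' - y‖ • (x' - y)) D x :=
    hc.smul hsub
  have hev : v =ᶠ[nhds x] (fun x' : EuclideanSpace ℝ (Fin d) => g ‖x' - y‖ • (x' - y)) := by
    filter_upwards [IsOpen.mem_nhds isOpen_compl_singleton hx] with a ha
    rw [hv a ha]
  have hfd : fderiv ℝ v x = D := by
    rw [hev.fderiv_eq]; exact hF.fderiv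
  rw [hfd]
  -- orthonormal basis with first vector in direction x - y
  set e0 : EuclideanSpace ℝ (Fin d) := s⁻¹ • (x - y) with he0
  have hcard : Module.finrank ℝ (EuclideanSpace ℝ (Fin d)) = Fintype.card (Fin d) := by simp
  have h_on : Orthonormal ℝ (({0} : Set (Fin d)).restrict (fun _ : Fin d => e0)) := by
    rw [orthonormal_iff_ite]
    rintro ⟨i, hi⟩ ⟨j, hj⟩
    simp only [Set.mem_singleton_iff] at hi hj
    subst hi; subst hj
    rw [if_pos rfl]
    show ⟪e0, e0⟫ = (1:ℝ)
    rw [he0, real_inner_smul_left, real_inner_smul_right, real_inner_self_eq_norm_sq, ← hs_def]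
    field_simp
  obtain ⟨b, hb⟩ := h_on.exists_orthonormalBasis_extension_of_card_eq hcard
  have hb0 : b 0 = e0 := hb 0 rfl
  have hz' : x - y = s • b 0 := by
    rw [hb0, he0, smul_smul, mul_inv_cancel₀ hs.ne', one_smul]
  have hinner : ∀ i j : Fin d, ⟪b i, b j⟫ = if i = j then (1:ℝ) else 0 :=
    fun i j => orthonormal_iff_ite.mp b.orthonormal i j
  set f : Fin d → ℝ := fun i => if i = 0 then 1 + t * gs + t * gd * s else 1 + t * gs
    with hf_def
  have hmat : LinearMap.toMatrix b.toBasis b.toBasis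
      (ContinuousLinearMap.id ℝ (EuclideanSpace ℝ (Fin d)) + t • D).toLinearMap
      = Matrix.diagonal f := by
    ext i j
    rw [LinearMap.toMatrix_apply, OrthonormalBasis.coe_toBasis_repr_apply,
      OrthonormalBasis.repr_apply_apply, OrthonormalBasis.coe_toBasis]
    simp only [hD_def, ContinuousLinearMap.coe_coe, ContinuousLinearMap.add_apply,
      ContinuousLinearMap.smul_apply, ContinuousLinearMap.coe_smul', Pi.smul_apply,
      ContinuousLinearMap.id_apply, ContinuousLinearMap.smulRight_apply,
      innerSL_apply_apply, smul_eq_mul]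
    rw [hz']
    simp only [inner_add_right, real_inner_smul_right, real_inner_smul_left, hinner]
    have hgs' : g s = gs := rfl
    rw [hgs']
    by_cases hij : i = j
    · subst hij
      by_cases hi0 : i = 0
      · subst hi0
        simp only [if_pos rfl, ↓reduceIte, Matrix.diagonal_apply_eq, hf_def]
        field_simp
        ring
      · simp only [if_pos rfl, if_neg (Ne.symm hi0), if_neg hi0,
          Matrix.diagonal_apply_eq, hf_def]
        norm_num
    · have h1 : ¬(0 = j) ∨ ¬(i = 0) := by
        by_contra h
        push_neg at h
        exact hij (h.2.trans h.1)
      rw [Matrix.diagonal_apply_ne _ hij]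
      rcases h1 with h1 | h1
      · simp [if_neg hij, if_neg h1]
      · simp [if_neg hij, if_neg h1]
  rw [← LinearMap.det_toMatrix b.toBasis, hmat, Matrix.det_diagonal]
  rw [← Finset.mul_prod_erase Finset.univ f (Finset.mem_univ 0)]
  have herase : ∏ i ∈ Finset.univ.erase (0 : Fin d), f i = (1 + t * gs) ^ (d - 1) := by
    rw [Finset.prod_congr rfl (fun i hi => if_neg (Finset.ne_of_mem_erase hi)),
      Finset.prod_const, Finset.card_erase_of_mem (Finset.mem_univ 0),
      Finset.card_univ, Fintype.card_fin]
  rw [herase]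
  have hf0 : f 0 = 1 + t / r * deriv w u := by
    simp only [hf_def, if_pos rfl, hgs_def, hgd_def]
    field_simp
    ring
  have halpha : 1 + t * gs = 1 + t * η / (r * s) * w u := by
    rw [hgs_def]
    field_simp
  rw [hf0, halpha]
end

section
/- Let d ≥ 2 be an integer, y ∈ ℝ^d, 0 < η < r, and let w be a shape function as in the context. Let x ≠ y and t ∈ [0,1] be such that 1 + (t/r) w′((|x−y|−r)/η) > 0. Then the linear map Id + t·Dv_{y,r,η}(x) is invertible, and its inverse maps v_{y,r,η}(x) to (1 + (t/r) w′((|x−y|−r)/η))^{-1} · v_{y,r,η}(x). -/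
open MeasureTheory RealInnerProductSpace

set_option maxHeartbeats 1000000 in
/-- If `1 + (t/r)w′((|x−y|−r)/η) > 0` then `Id + t·Dv_{y,r,η}(x)` is invertible and its
inverse maps `v_{y,r,η}(x)` to `(1 + (t/r)w′(⋯))⁻¹ • v_{y,r,η}(x)`. -/
theorem stmt_11
    (d : ℕ) (hd : 2 ≤ d)
    (y : EuclideanSpace ℝ (Fin d)) (η r : ℝ) (hη : 0 < η) (hηr : η < r)
    (w : ℝ → ℝ) (hw : ContDiff ℝ (⊤ : ℕ∞) w)
    (hw_supp : Function.support w ⊆ Set.Icc (-1 : ℝ) 1)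
    (hw_nonneg : ∀ s, 0 ≤ w s) (hw_int : (∫ s, w s) = 1)
    (v : EuclideanSpace ℝ (Fin d) → EuclideanSpace ℝ (Fin d))
    (hv : ∀ x, x ≠ y → v x = ((η / r) * w ((‖x - y‖ - r) / η) / ‖x - y‖) • (x - y))
    (hvy : v y = 0)
    (x : EuclideanSpace ℝ (Fin d)) (hx : x ≠ y)
    (t : ℝ) (ht : t ∈ Set.Icc (0 : ℝ) 1)
    (hpos : 0 < 1 + (t / r) * deriv w ((‖x - y‖ - r) / η)) :
    ∃ L : EuclideanSpace ℝ (Fin d) ≃L[ℝ] EuclideanSpace ℝ (Fin d),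
      (L : EuclideanSpace ℝ (Fin d) →L[ℝ] EuclideanSpace ℝ (Fin d))
          = ContinuousLinearMap.id ℝ (EuclideanSpace ℝ (Fin d)) + t • fderiv ℝ v x ∧
      L.symm (v x) = (1 + (t / r) * deriv w ((‖x - y‖ - r) / η))⁻¹ • v x := by
  obtain ⟨ht0, ht1⟩ := ht
  have hr : (0:ℝ) < r := hη.trans hηr
  have hzne : x - y ≠ 0 := sub_ne_zero.mpr hx
  have hρ : (0:ℝ) < ‖x - y‖ := norm_pos_iff.mpr hzne
  set ρ : ℝ := ‖x - y‖ with hρdef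
  set u : ℝ := (ρ - r) / η with hudef
  set n : EuclideanSpace ℝ (Fin d) := ρ⁻¹ • (x - y) with hndef
  set c : ℝ := (η / r) * w u / ρ with hcdef
  set c' : ℝ := deriv w u / (r * ρ) - (η / r) * w u / ρ ^ 2 with hc'def
  set a : ℝ := 1 + t * c with hadef
  set b : ℝ := t * c' * ρ with hbdef
  set C : ℝ := 1 + (t / r) * deriv w u with hCdef
  have hzn : (x - y) = ρ • n := by
    rw [hndef, smul_smul, mul_inv_cancel₀ hρ.ne', one_smul]
  have hnn : ⟪n, n⟫ = 1 := by
    rw [hndef, real_inner_smul_left, real_inner_smul_right,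
      real_inner_self_eq_norm_sq]
    field_simp
    rw [← hρdef]
  -- derivative of the norm
  have hsub : HasFDerivAt (fun x' : EuclideanSpace ℝ (Fin d) => x' - y)
      (ContinuousLinearMap.id ℝ (EuclideanSpace ℝ (Fin d))) x :=
    (hasFDerivAt_id x).sub_const y
  have hsq : HasFDerivAt (fun x' : EuclideanSpace ℝ (Fin d) => ‖x' - y‖ ^ 2)
      (2 • (innerSL ℝ (x - y)).comp
        (ContinuousLinearMap.id ℝ (EuclideanSpace ℝ (Fin d)))) x := hsub.norm_sq
  have hN : HasFDerivAt (fun x' : EuclideanSpace ℝ (Fin d) => ‖x' - y‖) (innerSL ℝ n) x := by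
    have h2 : ‖x - y‖ ^ 2 ≠ 0 := by positivity
    have hs := hsq.sqrt h2
    have heq : (fun x' : EuclideanSpace ℝ (Fin d) => Real.sqrt (‖x' - y‖ ^ 2))
        = fun x' => ‖x' - y‖ := funext fun x' => Real.sqrt_sq (norm_nonneg _)
    rw [heq] at hs
    refine hs.congr_fderiv ?_
    ext h
    simp only [ContinuousLinearMap.smul_apply, ContinuousLinearMap.coe_comp',
      Function.comp_apply, ContinuousLinearMap.coe_id', id_eq, innerSL_apply_apply,
      hndef, real_inner_smul_left, smul_eq_mul, Real.sqrt_sq hρ.le]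
    field_simp
    simp only [Real.sqrt_sq (norm_nonneg _), ← hρdef, Real.sqrt_sq hρ.le, nsmul_eq_mul, Nat.cast_ofNat]
    ring
  -- derivative of the scalar profile
  have hwu : HasDerivAt w (deriv w u) u := ((hw.differentiable (by simp)) u).hasDerivAt
  have hlin : HasDerivAt (fun s : ℝ => (s - r) / η) (1 / η) ρ := by
    simpa using ((hasDerivAt_id ρ).sub_const r).div_const η
  have hcomp : HasDerivAt (fun s : ℝ => w ((s - r) / η)) (deriv w u * (1 / η)) ρ :=
    HasDerivAt.comp ρ (by rwa [hudef] at hwu) hlin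
  have hnum : HasDerivAt (fun s : ℝ => (η / r) * w ((s - r) / η))
      ((η / r) * (deriv w u * (1 / η))) ρ := hcomp.const_mul _
  have hφ : HasDerivAt (fun s : ℝ => (η / r) * w ((s - r) / η) / s) c' ρ := by
    have := hnum.div (hasDerivAt_id ρ) hρ.ne'
    refine this.congr_deriv ?_
    simp only [id_eq, ← hudef]
    rw [hc'def]
    field_simp
  have hcf : HasFDerivAt
      (fun x' : EuclideanSpace ℝ (Fin d) => (η / r) * w ((‖x' - y‖ - r) / η) / ‖x' - y‖)
      (c' • innerSL ℝ n) x := hφ.comp_hasFDerivAt (f := fun x' : EuclideanSpace ℝ (Fin d) => ‖x' - y‖) x hN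
  -- derivative of v
  set D : EuclideanSpace ℝ (Fin d) →L[ℝ] EuclideanSpace ℝ (Fin d) :=
    c • ContinuousLinearMap.id ℝ (EuclideanSpace ℝ (Fin d))
      + (c' • innerSL ℝ n).smulRight (x - y) with hDdef
  have hV : HasFDerivAt
      (fun x' : EuclideanSpace ℝ (Fin d) =>
        ((η / r) * w ((‖x' - y‖ - r) / η) / ‖x' - y‖) • (x' - y)) D x := by
    have := hcf.smul hsub
    exact this
  have hev : v =ᶠ[nhds x] fun x' =>
      ((η / r) * w ((‖x' - y‖ - r) / η) / ‖x' - y‖) • (x' - y) := by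
    filter_upwards [isOpen_compl_singleton.mem_nhds (hx : x ∈ ({y}ᶜ : Set _))] with x' hx'
    exact hv x' hx'
  have hDv : HasFDerivAt v D x := hV.congr_of_eventuallyEq hev
  have hfd : fderiv ℝ v x = D := hDv.fderiv
  -- scalars
  have ha : (0:ℝ) < a := by
    have : 0 ≤ t * c := by
      apply mul_nonneg ht0
      rw [hcdef]
      exact div_nonneg (mul_nonneg (by positivity) (hw_nonneg u)) hρ.le
    linarith [this]
  have hC : (0:ℝ) < C := hpos
  have habC : a + b = C := by
    rw [hadef, hbdef, hCdef, hcdef, hc'def]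
    field_simp
    ring
  -- the forward and inverse maps
  set A : EuclideanSpace ℝ (Fin d) →L[ℝ] EuclideanSpace ℝ (Fin d) :=
    ContinuousLinearMap.id ℝ (EuclideanSpace ℝ (Fin d)) + t • D with hAdef
  set B : EuclideanSpace ℝ (Fin d) →L[ℝ] EuclideanSpace ℝ (Fin d) :=
    a⁻¹ • ContinuousLinearMap.id ℝ (EuclideanSpace ℝ (Fin d))
      - (b / (a * C)) • (innerSL ℝ n).smulRight n with hBdef
  have hA : ∀ h, A h = a • h + (b * ⟪n, h⟫) • n := by
    intro h
    simp only [hAdef, hDdef, ContinuousLinearMap.add_apply, ContinuousLinearMap.smul_apply,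
      ContinuousLinearMap.coe_id', id_eq, ContinuousLinearMap.coe_smul',
      Pi.smul_apply, ContinuousLinearMap.smulRight_apply, innerSL_apply_apply]
    rw [hzn, hadef, hbdef]
    match_scalars <;> (try simp only [smul_eq_mul]) <;> ring
  have hB : ∀ h, B h = a⁻¹ • h - (b / (a * C) * ⟪n, h⟫) • n := by
    intro h
    simp only [hBdef, ContinuousLinearMap.sub_apply, ContinuousLinearMap.smul_apply,
      ContinuousLinearMap.coe_id', id_eq, ContinuousLinearMap.smulRight_apply, innerSL_apply_apply]
    match_scalars <;> (try simp only [smul_eq_mul]) <;> ring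
  have hBA : ∀ h, B (A h) = h := by
    intro h
    have hp : ⟪n, A h⟫ = C * ⟪n, h⟫ := by
      rw [hA, inner_add_right, real_inner_smul_right, real_inner_smul_right, hnn, mul_one,
        ← habC]
      ring
    rw [hB, hp, hA]
    generalize ⟪n, h⟫ = p
    have ha' : a ≠ 0 := ha.ne'
    have hC' : C ≠ 0 := hC.ne'
    clear_value C b a c' c u ρ n
    match_scalars
    · field_simp
    · field_simp
      ring
  have hAB : ∀ h, A (B h) = h := by
    intro h
    have hp : ⟪n, B h⟫ = (a⁻¹ - b / (a * C)) * ⟪n, h⟫ := by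
      rw [hB, inner_sub_right, real_inner_smul_right, real_inner_smul_right, hnn, mul_one]
      ring
    rw [hA, hp, hB]
    generalize ⟪n, h⟫ = p
    have ha' : a ≠ 0 := ha.ne'
    have hC' : C ≠ 0 := hC.ne'
    clear_value C b a c' c u ρ n
    match_scalars
    · field_simp
    · field_simp
      linear_combination (-(b * p)) * habC
  refine ⟨ContinuousLinearEquiv.equivOfInverse A B hBA hAB, ?_, ?_⟩
  · rw [hfd]; rfl
  · have hvx : v x = (c * ρ) • n := by
      rw [hv x hx, ← hρdef, ← hudef, ← hcdef, hzn, smul_smul]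
    have hAvx : A (v x) = C • v x := by
      rw [hvx, hA, real_inner_smul_right, hnn, mul_one]
      clear_value C b a c' c u ρ n
      match_scalars
      linear_combination (c * ρ) * habC
    rw [ContinuousLinearEquiv.symm_apply_eq]
    symm
    show A (C⁻¹ • v x) = v x
    rw [_root_.map_smul, hAvx, smul_smul, inv_mul_cancel₀ hC.ne', one_smul]
end

section
/- Let η > 0 and β > 0, and let w : ℝ → ℝ be a nonnegative integrable function with ∫_ℝ w = 1 and w(t) = 0 for |t| > η. Then for every ζ ∈ ℝ, | ∫_ℝ w(t) e^{−itζ} dt − 1 | ≤ 2 η^{β/(β+1)} (1 + ζ²)^{β/2}. -/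
/-!
Since `∫ w = 1`, the quantity to bound is `∫ w(t) (e^{-itζ} - 1) dt`, an average of
`|e^{-itζ} - 1|` over `|t| ≤ η`. With `θ = β / (β + 1) ∈ (0, 1)` one has
`|e^{ix} - 1| ≤ min 2 |x| ≤ 2 |x|^θ`, and for `|t| ≤ η`,
`|tζ|^θ ≤ η^θ |ζ|^θ ≤ η^θ (1 + ζ²)^{θ/2} ≤ η^θ (1 + ζ²)^{β/2}` because `θ ≤ β`.
-/

open MeasureTheory Complex

lemma Real.min_one_le_rpow {a θ : ℝ} (ha : 0 ≤ a) (hθ₀ : 0 ≤ θ) (hθ₁ : θ ≤ 1) :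
    min 1 a ≤ a ^ θ := by
  rcases le_total a 1 with h | h
  · exact (min_le_right _ _).trans (Real.self_le_rpow_of_le_one ha h hθ₁)
  · exact (min_le_left _ _).trans (Real.one_le_rpow h hθ₀)

lemma norm_exp_I_mul_ofReal_sub_one_le_rpow (x : ℝ) {θ : ℝ} (hθ₀ : 0 ≤ θ) (hθ₁ : θ ≤ 1) :
    ‖exp (I * x) - 1‖ ≤ 2 * |x| ^ θ := by
  have h_two : ‖exp (I * x) - 1‖ ≤ 2 := by
    calc ‖exp (I * x) - 1‖ ≤ ‖exp (I * x)‖ + ‖(1 : ℂ)‖ := norm_sub_le _ _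
      _ = 2 := by rw [norm_exp_I_mul_ofReal, norm_one]; norm_num
  have h_abs : ‖exp (I * x) - 1‖ ≤ |x| := Real.norm_exp_I_mul_ofReal_sub_one_le
  calc ‖exp (I * x) - 1‖ ≤ 2 * min 1 |x| := by
        rw [mul_min_of_nonneg _ _ zero_le_two]
        exact le_min (by simpa using h_two) (by linarith [abs_nonneg x])
    _ ≤ 2 * |x| ^ θ := by gcongr; exact Real.min_one_le_rpow (abs_nonneg x) hθ₀ hθ₁

lemma Real.abs_rpow_le_one_add_sq_rpow (ζ : ℝ) {θ β : ℝ} (hθ : 0 ≤ θ) (hθβ : θ ≤ β) :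
    |ζ| ^ θ ≤ (1 + ζ ^ 2) ^ (β / 2) := by
  have h_one : 1 ≤ 1 + ζ ^ 2 := le_add_of_nonneg_right (sq_nonneg ζ)
  have h_abs : |ζ| ≤ (1 + ζ ^ 2) ^ (1 / 2 : ℝ) := by
    rw [← Real.sqrt_eq_rpow, ← Real.sqrt_sq_eq_abs]
    exact Real.sqrt_le_sqrt (by linarith)
  calc |ζ| ^ θ ≤ ((1 + ζ ^ 2) ^ (1 / 2 : ℝ)) ^ θ := by gcongr
    _ = (1 + ζ ^ 2) ^ (θ / 2) := by
        rw [← Real.rpow_mul (by linarith)]; ring_nf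
    _ ≤ (1 + ζ ^ 2) ^ (β / 2) := Real.rpow_le_rpow_of_exponent_le h_one (by linarith)

lemma norm_integral_mul_sub_one_le {α : Type*} [MeasurableSpace α] {μ : Measure α}
    {w : α → ℝ} (hw_nonneg : ∀ t, 0 ≤ w t) (hw_int : Integrable w μ) (hw_one : ∫ t, w t ∂μ = 1)
    {f : α → ℂ} (hf : AEStronglyMeasurable f μ) {c : ℝ} (hfc : ∀ t, w t ≠ 0 → ‖f t - 1‖ ≤ c) :
    ‖(∫ t, (w t : ℂ) * f t ∂μ) - 1‖ ≤ c := by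
  have h_bound : ∀ t, ‖(w t : ℂ) * (f t - 1)‖ ≤ w t * c := by
    intro t
    rw [norm_mul, norm_real, Real.norm_of_nonneg (hw_nonneg t)]
    by_cases hwt : w t = 0
    · simp [hwt]
    · exact mul_le_mul_of_nonneg_left (hfc t hwt) (hw_nonneg t)
  have h_int : Integrable (fun t => (w t : ℂ) * (f t - 1)) μ :=
    (hw_int.mul_const c).mono'
      ((hw_int.ofReal.aestronglyMeasurable).mul (hf.sub aestronglyMeasurable_const))
      (.of_forall h_bound)
  have h_split : (∫ t, (w t : ℂ) * f t ∂μ) - 1 = ∫ t, (w t : ℂ) * (f t - 1) ∂μ := by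
    have h_eq : (fun t => (w t : ℂ) * f t) = fun t => (w t : ℂ) * (f t - 1) + w t := by
      ext t; ring
    have hwc_int : Integrable (fun t => (w t : ℂ)) μ := hw_int.ofReal
    rw [h_eq, integral_add h_int hwc_int, integral_complex_ofReal, hw_one]
    push_cast; ring
  calc ‖(∫ t, (w t : ℂ) * f t ∂μ) - 1‖ ≤ ∫ t, w t * c ∂μ := by
        rw [h_split]; exact norm_integral_le_of_norm_le (hw_int.mul_const c) (.of_forall h_bound)
    _ = c := by rw [integral_mul_const, hw_one, one_mul]

theorem stmt_15_general
    (η β : ℝ) (hβ : 0 < β)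
    (w : ℝ → ℝ) (hw_nonneg : ∀ t, 0 ≤ w t) (hw_int : Integrable w)
    (hw_one : (∫ t, w t) = 1) (hw_supp : ∀ t : ℝ, η < |t| → w t = 0)
    (ζ : ℝ) :
    ‖(∫ t : ℝ, (w t : ℂ) * Complex.exp (-(Complex.I * ((t * ζ : ℝ) : ℂ)))) - 1‖
      ≤ 2 * η ^ (β / (β + 1)) * (1 + ζ ^ 2) ^ (β / 2) := by
  set θ := β / (β + 1)
  have hθ₀ : 0 ≤ θ := by positivity
  have hθ₁ : θ ≤ 1 := (div_le_one (by linarith)).2 (by linarith)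
  have hθβ : θ ≤ β := div_le_self hβ.le (by linarith)
  refine norm_integral_mul_sub_one_le hw_nonneg hw_int hw_one (by fun_prop) fun t hwt => ?_
  have ht : |t| ≤ η := not_lt.1 fun h => hwt (hw_supp t h)
  have h_neg : -(I * ((t * ζ : ℝ) : ℂ)) = I * ((-(t * ζ) : ℝ) : ℂ) := by push_cast; ring
  calc ‖exp (-(I * ((t * ζ : ℝ) : ℂ))) - 1‖ ≤ 2 * |-(t * ζ)| ^ θ := by
        rw [h_neg]; exact norm_exp_I_mul_ofReal_sub_one_le_rpow _ hθ₀ hθ₁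
    _ = 2 * (|t| ^ θ * |ζ| ^ θ) := by
        rw [abs_neg, abs_mul, Real.mul_rpow (abs_nonneg t) (abs_nonneg ζ)]
    _ ≤ 2 * (η ^ θ * (1 + ζ ^ 2) ^ (β / 2)) := by
        gcongr
        · exact Real.rpow_nonneg ((abs_nonneg t).trans ht) θ
        · exact Real.abs_rpow_le_one_add_sq_rpow ζ hθ₀ hθβ
    _ = 2 * η ^ θ * (1 + ζ ^ 2) ^ (β / 2) := by ring

/-- For a nonnegative mollifier `w` of mass `1` supported in `[−η, η]`, the Fourier transform
satisfies `|ŵ(ζ) − 1| ≤ 2 η^{β/(β+1)} (1 + ζ²)^{β/2}`. -/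
theorem stmt_15
    (η β : ℝ) (hη : 0 < η) (hβ : 0 < β)
    (w : ℝ → ℝ) (hw_nonneg : ∀ t, 0 ≤ w t) (hw_int : Integrable w)
    (hw_one : (∫ t, w t) = 1) (hw_supp : ∀ t : ℝ, η < |t| → w t = 0)
    (ζ : ℝ) :
    ‖(∫ t : ℝ, (w t : ℂ) * Complex.exp (-(Complex.I * ((t * ζ : ℝ) : ℂ)))) - 1‖
      ≤ 2 * η ^ (β / (β + 1)) * (1 + ζ ^ 2) ^ (β / 2) :=
  stmt_15_general η β hβ w hw_nonneg hw_int hw_one hw_supp ζ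
end
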